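/- arXiv:math/0703457 — 3 statements merged into one kernel-verified Lean document; each statement's English description precedes it below -/
import Mathlib

section
/- Let k be a field, let A be a k-linear abelian category such that Ext^i_A(X,Y) is finite-dimensional over k for all objects X, Y and all i ≥ 0, and let n be a natural number. Suppose that for every i ∈ ℤ and all objects X, Y of A there is a k-linear isomorphism Ext^i_A(X,Y) ≅ (Ext^{n-i}_A(Y,X))*, where Ext^0 = Hom and Ext^j = 0 for j < 0, and (−)* denotes the k-linear dual. Then: (a) Ext^i_A(X,Y) = 0 for all i > n and all objects X, Y; and (b) Ext^n_A(X,X) ≠ 0 for every nonzero object X. In particular, if A has a nonzero object, the global dimension of A equals n. -/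
open CategoryTheory Limits

universe w v u

section Preliminaries

variable {k : Type*} [Field k] {A : Type u} [Category.{v} A] [Abelian A]
  [CategoryTheory.Linear k A] [HasExt.{w} A]

lemma Ext_mk₀_add {X Y : A} (f g : X ⟶ Y) :
    Abelian.Ext.mk₀ (f + g) = Abelian.Ext.mk₀ f + Abelian.Ext.mk₀ g := by
  letI := HasDerivedCategory.standard A
  apply Abelian.Ext.homAddEquiv.injective
  rw [map_add]
  simp only [Abelian.Ext.homAddEquiv_apply, Abelian.Ext.mk₀_hom]
  dsimp [ShiftedHom.mk₀]
  rw [Functor.map_add, Preadditive.add_comp]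

/-- The `k`-vector space structure on the Ext-groups of a `k`-linear abelian category,
where a scalar `c : k` acts on an extension class by composition with `c • 𝟙 _`. -/
noncomputable instance extModule {X Y : A} {n : ℕ} : Module k (Abelian.Ext X Y n) where
  smul c α := α.comp (Abelian.Ext.mk₀ (c • 𝟙 Y)) (add_zero n)
  one_smul α := by
    show α.comp (Abelian.Ext.mk₀ ((1 : k) • 𝟙 Y)) (add_zero n) = α
    rw [one_smul]; exact α.comp_mk₀_id
  mul_smul c c' α := by
    show α.comp (Abelian.Ext.mk₀ ((c * c') • 𝟙 Y)) (add_zero n)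
      = (α.comp (Abelian.Ext.mk₀ (c' • 𝟙 Y)) (add_zero n)).comp
          (Abelian.Ext.mk₀ (c • 𝟙 Y)) (add_zero n)
    rw [Abelian.Ext.comp_assoc_of_third_deg_zero, Abelian.Ext.mk₀_comp_mk₀]
    congr 2
    rw [Linear.smul_comp, Linear.comp_smul, Category.id_comp, smul_smul, mul_comm]
  smul_zero c := by
    show (0 : Abelian.Ext X Y n).comp _ _ = 0
    simp
  smul_add c α β := by
    show (α + β).comp _ _ = α.comp _ _ + β.comp _ _
    simp
  add_smul c c' α := by
    show α.comp (Abelian.Ext.mk₀ ((c + c') • 𝟙 Y)) (add_zero n)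
      = α.comp (Abelian.Ext.mk₀ (c • 𝟙 Y)) (add_zero n)
        + α.comp (Abelian.Ext.mk₀ (c' • 𝟙 Y)) (add_zero n)
    rw [add_smul, Ext_mk₀_add, Abelian.Ext.comp_add]
  zero_smul α := by
    show α.comp (Abelian.Ext.mk₀ ((0 : k) • 𝟙 Y)) (add_zero n) = 0
    rw [zero_smul, Abelian.Ext.mk₀_zero, Abelian.Ext.comp_zero]

variable (k) in
/-- The `ℤ`-indexed family of Ext-spaces of `A`, as bundled `k`-vector spaces, with the
conventions `Ext⁰ = Hom` and `Extʲ = 0` for `j < 0`. -/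
noncomputable def extZ (X Y : A) (i : ℤ) : ModuleCat.{max w v} k :=
  match i with
  | .ofNat 0 => ModuleCat.of k (ULift.{w} (X ⟶ Y))
  | .ofNat (m + 1) => ModuleCat.of k (ULift.{v} (Abelian.Ext X Y (m + 1)))
  | .negSucc _ => ModuleCat.of k PUnit

end Preliminaries


lemma extZ_neg_subsingleton {k : Type*} [Field k] {A : Type u} [Category.{v} A] [Abelian A]
    [CategoryTheory.Linear k A] [HasExt.{w} A] (X Y : A) (j : ℤ) (hj : j < 0) :
    Subsingleton (extZ k X Y j) := by
  match j with
  | .ofNat m => exact absurd hj (Int.ofNat_nonneg m).not_gt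
  | .negSucc m => exact (inferInstance : Subsingleton PUnit)

/-- Let `A` be a `k`-linear abelian category with all `Ext`-spaces
finite-dimensional over `k`, and let `n : ℕ`.  Suppose that for every `i : ℤ` and all objects
`X, Y` there is a `k`-linear isomorphism `Extⁱ(X,Y) ≅ (Ext^{n-i}(Y,X))*` (where `Ext⁰ = Hom`
and `Extʲ = 0` for `j < 0`).  Then (a) `Extⁱ(X,Y) = 0` for all `i > n`, and (b)
`Extⁿ(X,X) ≠ 0` for every nonzero `X`; in particular if `A` has a nonzero object then the
global dimension of `A` is exactly `n`. -/
theorem calabiYau_dimension_eq_global_dimension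
    {k : Type*} [Field k] {A : Type u} [Category.{v} A] [Abelian A]
    [CategoryTheory.Linear k A] [HasExt.{w} A]
    (extFinite : ∀ (X Y : A) (i : ℤ), FiniteDimensional k (extZ k X Y i))
    (n : ℕ)
    (hdual : ∀ (i : ℤ) (X Y : A),
      Nonempty ((extZ k X Y i) ≃ₗ[k] Module.Dual k (extZ k Y X ((n : ℤ) - i)))) :
    (∀ (i : ℤ), (n : ℤ) < i → ∀ X Y : A, Subsingleton (extZ k X Y i)) ∧
    (∀ X : A, ¬ IsZero X → Nontrivial (extZ k X X (n : ℤ))) ∧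
    ((∃ X : A, ¬ IsZero X) →
      ((∀ (i : ℤ) (X Y : A), Nontrivial (extZ k X Y i) → i ≤ (n : ℤ)) ∧
        (∃ X : A, Nontrivial (extZ k X X (n : ℤ))))) := by
  have ha : ∀ (i : ℤ), (n : ℤ) < i → ∀ X Y : A, Subsingleton (extZ k X Y i) := by
    intro i hi X Y
    obtain ⟨e⟩ := hdual i X Y
    have hs : Subsingleton (extZ k Y X ((n : ℤ) - i)) :=
      extZ_neg_subsingleton Y X _ (by omega)
    have : Subsingleton (Module.Dual k (extZ k Y X ((n : ℤ) - i))) :=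
      (Module.subsingleton_dual_iff k).mpr hs
    exact e.toEquiv.subsingleton
  have hb : ∀ X : A, ¬ IsZero X → Nontrivial (extZ k X X (n : ℤ)) := by
    intro X hX
    obtain ⟨e⟩ := hdual (n : ℤ) X X
    rw [sub_self] at e
    have h1 : (𝟙 X : X ⟶ X) ≠ 0 := fun h => hX ((IsZero.iff_id_eq_zero X).mpr h)
    have h2 : Nontrivial (X ⟶ X) := nontrivial_of_ne _ 0 h1
    have h3 : Nontrivial (extZ k X X (0 : ℤ)) :=
      (inferInstance : Nontrivial (ULift.{w} (X ⟶ X)))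
    have : Nontrivial (Module.Dual k (extZ k X X (0 : ℤ))) := inferInstance
    exact e.toEquiv.nontrivial
  refine ⟨ha, hb, fun ⟨X, hX⟩ => ⟨fun i Y Z hnt => ?_, ⟨X, hb X hX⟩⟩⟩
  by_contra h
  have := ha i (by omega) Y Z
  exact (not_subsingleton_iff_nontrivial.mpr hnt) this
end

section
/- Let k be a field and A a k-linear abelian category that is Hom-finite, i.e. Hom_A(X,Y) is finite-dimensional over k for all objects X, Y. Let X be an object of A and f : X → X an endomorphism that is not an isomorphism, and let I = im(f) be the image of f. Then dim_k End_A(I) < dim_k End_A(X). -/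
open CategoryTheory Limits

universe v u

/-! Factor `f = p ≫ i` with `p` epi and `i` mono. Then `g ↦ p ≫ g ≫ i` embeds `End(im f)` linearly
into `End(X)`, and it is not onto: `𝟙 X = p ≫ g ≫ i` would make `p` split mono and `i` split epi,
hence both isomorphisms, and so `f` too. -/

theorem LinearMap.finrank_lt_finrank_of_injective_of_not_surjective {K V W : Type*}
    [DivisionRing K] [AddCommGroup V] [Module K V] [AddCommGroup W] [Module K W]
    [FiniteDimensional K W] {φ : V →ₗ[K] W} (hinj : Function.Injective φ)
    (hsurj : ¬ Function.Surjective φ) : Module.finrank K V < Module.finrank K W := by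
  rw [← LinearMap.finrank_range_of_inj hinj]
  exact Submodule.finrank_lt (mt LinearMap.range_eq_top.mp hsurj)

namespace CategoryTheory.Linear

variable (k : Type*) [Semiring k] {C : Type*} [Category C] [Preadditive C] [Linear k C]

def sandwich {X Y Y' X' : C} (p : X ⟶ Y) (i : Y' ⟶ X') : (Y ⟶ Y') →ₗ[k] (X ⟶ X') :=
  leftComp k X' p ∘ₗ rightComp k Y i

variable {k}

@[simp]
theorem sandwich_apply {X Y Y' X' : C} (p : X ⟶ Y) (i : Y' ⟶ X') (g : Y ⟶ Y') :
    sandwich k p i g = p ≫ g ≫ i :=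
  rfl

theorem sandwich_injective {X Y Y' X' : C} (p : X ⟶ Y) (i : Y' ⟶ X') [Epi p] [Mono i] :
    Function.Injective (sandwich k p i) := fun g h hgh => by
  simpa only [sandwich_apply, cancel_epi, cancel_mono] using hgh

end CategoryTheory.Linear

namespace CategoryTheory

theorem isIso_comp_of_comp_comp_eq_id {C : Type*} [Category C] {X Y : C} {p : X ⟶ Y}
    {i : Y ⟶ X} [Epi p] [Mono i] {g : Y ⟶ Y} (hg : p ≫ g ≫ i = 𝟙 X) : IsIso (p ≫ i) := by
  have : IsSplitMono p := .mk' ⟨g ≫ i, hg⟩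
  have : IsSplitEpi i := .mk' ⟨p ≫ g, by rw [Category.assoc, hg]⟩
  have := isIso_of_epi_of_isSplitMono p
  have := isIso_of_mono_of_isSplitEpi i
  infer_instance

end CategoryTheory

/-- Let `k` be a field and `A` a Hom-finite `k`-linear abelian category.
If `f : X ⟶ X` is an endomorphism which is not an isomorphism, and `I = im f` is its image,
then `dim_k End(I) < dim_k End(X)`. -/
theorem dim_end_image_lt_dim_end_of_not_isIso
    (k : Type*) [Field k] (A : Type u) [Category.{v} A] [Abelian A] [Linear k A]
    (homFinite : ∀ X Y : A, FiniteDimensional k (X ⟶ Y))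
    (X : A) (f : X ⟶ X) (hf : ¬ IsIso f) :
    Module.finrank k (Abelian.image f ⟶ Abelian.image f) <
      Module.finrank k (X ⟶ X) := by
  have := homFinite X X
  refine LinearMap.finrank_lt_finrank_of_injective_of_not_surjective
    (Linear.sandwich_injective (Abelian.factorThruImage f) (Abelian.image.ι f)) ?_
  intro hsurj
  obtain ⟨g, hg⟩ := hsurj (𝟙 X)
  exact hf (Abelian.image.fac f ▸ isIso_comp_of_comp_comp_eq_id hg)
end

section
/- Let k be an algebraically closed field and A a Hom-finite k-linear abelian category, i.e. Hom_A(X,Y) is finite-dimensional over k for all objects X, Y. Then for every nonzero object X of A there exists an endo-simple object S (i.e. the canonical map k → End_A(S) is an isomorphism) together with a monomorphism S → X and an epimorphism X → S. In particular, every Hom-finite k-linear abelian category with a nonzero object has an endo-simple object. -/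
open CategoryTheory Limits

universe v u

/-- An object `S` is *endo-simple* if the canonical map `k → End S`, `c ↦ c • 𝟙 S`,
is an isomorphism (equivalently, a bijection). -/
def EndoSimple (k : Type*) [Field k] {A : Type u} [Category.{v} A] [Preadditive A]
    [CategoryTheory.Linear k A] (S : A) : Prop :=
  Function.Bijective (fun c : k => c • 𝟙 S)

section Aux

variable (k : Type*) [Field k] [IsAlgClosed k] {A : Type u} [Category.{v} A] [Abelian A]
    [CategoryTheory.Linear k A]

lemma endoSimple_aux (homFinite : ∀ X Y : A, FiniteDimensional k (X ⟶ Y)) :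
    ∀ n : ℕ, ∀ X : A, ¬ IsZero X → Module.finrank k (X ⟶ X) ≤ n →
      ∃ S : A, EndoSimple k S ∧ (∃ ι : S ⟶ X, Mono ι) ∧ (∃ π : X ⟶ S, Epi π) := by
  intro n
  induction n with
  | zero =>
    intro X hX hle
    exfalso
    have hid : (𝟙 X) ≠ (0 : X ⟶ X) := fun h => hX ((IsZero.iff_id_eq_zero X).mpr h)
    have : Nontrivial (X ⟶ X) := nontrivial_of_ne _ _ hid
    have := homFinite X X
    have := Module.finrank_pos (R := k) (M := X ⟶ X)
    omega
  | succ n ih =>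
    intro X hX hle
    have hid : (𝟙 X) ≠ (0 : X ⟶ X) := fun h => hX ((IsZero.iff_id_eq_zero X).mpr h)
    by_cases hs : EndoSimple k X
    · exact ⟨X, hs, ⟨𝟙 X, inferInstance⟩, ⟨𝟙 X, inferInstance⟩⟩
    · -- there is a non-scalar endomorphism
      have hinj : Function.Injective (fun c : k => c • 𝟙 X) := by
        intro a b hab
        by_contra hne
        have h0 : (a - b) • 𝟙 X = 0 := by
          simp only at hab
          rw [sub_smul, hab, sub_self]
        have : (𝟙 X) = 0 := by
          have := congrArg (fun g => (a - b)⁻¹ • g) h0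
          simpa [smul_smul, inv_mul_cancel₀ (sub_ne_zero.mpr hne)] using this
        exact hid this
      have hnsurj : ¬ Function.Surjective (fun c : k => c • 𝟙 X) := by
        intro hsurj; exact hs ⟨hinj, hsurj⟩
      rw [Function.Surjective] at hnsurj; push_neg at hnsurj
      obtain ⟨f, hf⟩ := hnsurj
      -- spectrum argument
      have : Nontrivial (End X) := nontrivial_of_ne _ _ hid
      have : FiniteDimensional k (End X) := homFinite X X
      obtain ⟨c, nu⟩ := spectrum.nonempty_of_isAlgClosed_of_finiteDimensional k (End.of f)
      rw [spectrum.mem_iff] at nu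
      set g : X ⟶ X := c • 𝟙 X - f with hg
      have key : End.of g = algebraMap k (End X) c - End.of f := by
        show c • 𝟙 X - f = algebraMap k (End X) c - End.of f
        rw [Algebra.algebraMap_eq_smul_one]
        rfl
      have hgu : ¬ IsUnit (End.of g) := by rw [key]; exact nu
      have hgne : g ≠ 0 := by
        intro h0
        exact hf c (by rw [← sub_eq_zero]; exact h0)
      have hgiso : ¬ IsIso g := fun h => hgu ((isUnit_iff_isIso (End.of g)).mpr h)
      -- image factorization
      set I : A := image g with hI
      set p : X ⟶ I := factorThruImage g with hp
      set i : I ⟶ X := image.ι g with hi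
      have hfac : p ≫ i = g := image.fac g
      have hInz : ¬ IsZero I := by
        intro hz
        apply hgne
        rw [← hfac, hz.eq_zero_of_tgt p, zero_comp]
      -- the linear comparison map
      have := homFinite I I
      have := homFinite X X
      let Φ : (I ⟶ I) →ₗ[k] (X ⟶ X) :=
        { toFun := fun h => p ≫ h ≫ i
          map_add' := by intro a b; simp [Preadditive.comp_add, Preadditive.add_comp]
          map_smul' := by intro r a; simp }
      have hΦinj : Function.Injective Φ := by
        intro a b hab
        simp only [Φ, LinearMap.coe_mk, AddHom.coe_mk] at hab
        rw [← cancel_epi p, ← cancel_mono i]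
        simpa using hab
      have hle' : Module.finrank k (I ⟶ I) ≤ Module.finrank k (X ⟶ X) :=
        LinearMap.finrank_le_finrank_of_injective hΦinj
      have hlt : Module.finrank k (I ⟶ I) < Module.finrank k (X ⟶ X) := by
        rcases lt_or_eq_of_le hle' with h | h
        · exact h
        · exfalso
          have hsurj : Function.Surjective Φ :=
            (LinearMap.injective_iff_surjective_of_finrank_eq_finrank h).mp hΦinj
          obtain ⟨e, he⟩ := hsurj (𝟙 X)
          have he' : p ≫ e ≫ i = 𝟙 X := he
          haveI : IsSplitEpi i := ⟨⟨⟨p ≫ e, by rw [Category.assoc]; exact he'⟩⟩⟩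
          haveI : IsIso i := isIso_of_mono_of_isSplitEpi i
          haveI : IsSplitMono p := ⟨⟨⟨e ≫ i, by rw [← Category.assoc] at he' ⊢; exact he'⟩⟩⟩
          haveI : IsIso p := isIso_of_epi_of_isSplitMono p
          have : IsIso g := by rw [← hfac]; infer_instance
          exact hgiso this
      obtain ⟨S, hS, ⟨ι, hι⟩, ⟨π, hπ⟩⟩ := ih I hInz (by omega)
      refine ⟨S, hS, ⟨ι ≫ i, ?_⟩, ⟨p ≫ π, ?_⟩⟩
      · exact mono_comp ι i
      · exact epi_comp p π

end Aux

/-- Let `k` be an algebraically closed field and `A` a Hom-finite `k`-linear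
abelian category.  Then every nonzero object `X` of `A` admits an endo-simple object `S`
together with a monomorphism `S ⟶ X` and an epimorphism `X ⟶ S`.  In particular, if `A` has
a nonzero object, then `A` has an endo-simple object. -/
theorem exists_endoSimple_subobject_and_quotient
    (k : Type*) [Field k] [IsAlgClosed k] (A : Type u) [Category.{v} A] [Abelian A]
    [CategoryTheory.Linear k A]
    (homFinite : ∀ X Y : A, FiniteDimensional k (X ⟶ Y)) :
    (∀ X : A, ¬ IsZero X →
      ∃ S : A, EndoSimple k S ∧ (∃ ι : S ⟶ X, Mono ι) ∧ (∃ π : X ⟶ S, Epi π)) ∧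
    ((∃ X : A, ¬ IsZero X) → ∃ S : A, EndoSimple k S) := by
  constructor
  · intro X hX
    exact endoSimple_aux k homFinite (Module.finrank k (X ⟶ X)) X hX le_rfl
  · rintro ⟨X, hX⟩
    obtain ⟨S, hS, -, -⟩ := endoSimple_aux k homFinite (Module.finrank k (X ⟶ X)) X hX le_rfl
    exact ⟨S, hS⟩
end
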